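/- arXiv:math-ph/0610061 — 3 statements merged into one kernel-verified Lean document; each statement's English description precedes it below -/
import Mathlib

section
/- For every x, y ∈ Λ, the Grassmann product coefficient function I ↦ Σ_{J ⊆ I} σ(J, I∖J)·x(J)·y(I∖J) again lies in ℓ¹ (i.e. it is absolutely summable over all finite subsets of ℕ, hence defines an element x*y ∈ Λ), and its ℓ¹-norm satisfies ‖x*y‖ ≤ ‖x‖·‖y‖. -/
open scoped BigOperators

noncomputable section

/-- The Banach Grassmann algebra on countably many generators, modeled as the
ℓ¹-space of coefficient functions `Finset ℕ → ℝ`. -/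
abbrev Lambda : Type := lp (fun _ : Finset ℕ => ℝ) 1

/-- The shuffle sign `σ(J,K) = (−1)^#{(j,k) ∈ J × K : k < j}`. -/
def shuffleSign (J K : Finset ℕ) : ℝ :=
  (-1 : ℝ) ^ ((J ×ˢ K).filter fun p => p.2 < p.1).card

/-- The coefficient function of the Grassmann product:
`(x*y)(I) = Σ_{J ⊆ I} σ(J, I∖J)·x(J)·y(I∖J)`. -/
def grassCoeff (x y : Finset ℕ → ℝ) (I : Finset ℕ) : ℝ :=
  ∑ J ∈ I.powerset, shuffleSign J (I \ J) * x J * y (I \ J)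

/-- Disjoint pairs of finsets are equivalent to pairs (I, subset of I). -/
def disjEquiv : {p : Finset ℕ × Finset ℕ // Disjoint p.1 p.2} ≃
    Σ I : Finset ℕ, {J : Finset ℕ // J ∈ I.powerset} where
  toFun p := ⟨p.1.1 ∪ p.1.2, ⟨p.1.1, Finset.mem_powerset.2 Finset.subset_union_left⟩⟩
  invFun q := ⟨(q.2.1, q.1 \ q.2.1), Finset.disjoint_sdiff⟩
  left_inv p := by
    obtain ⟨⟨J, K⟩, h⟩ := p
    simp [Finset.union_sdiff_cancel_left h]
  right_inv q := by
    obtain ⟨I, ⟨J, hJ⟩⟩ := q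
    exact Sigma.subtype_ext (Finset.union_sdiff_of_subset (Finset.mem_powerset.1 hJ)) rfl

/-- Key convolution estimate for nonnegative summable coefficient functions. -/
theorem grass_key (a b : Finset ℕ → ℝ) (ha : Summable a) (hb : Summable b)
    (ha0 : ∀ J, 0 ≤ a J) (hb0 : ∀ K, 0 ≤ b K) :
    Summable (fun I : Finset ℕ => ∑ J ∈ I.powerset, a J * b (I \ J)) ∧
      (∑' I : Finset ℕ, ∑ J ∈ I.powerset, a J * b (I \ J)) ≤ (∑' J, a J) * ∑' K, b K := by
  have Sprod : Summable fun p : Finset ℕ × Finset ℕ => a p.1 * b p.2 :=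
    ha.mul_of_nonneg hb ha0 hb0
  have Ssub : Summable fun p : {p : Finset ℕ × Finset ℕ // Disjoint p.1 p.2} =>
      a p.1.1 * b p.1.2 := Sprod.subtype _
  have Ssig : Summable fun q : Σ I : Finset ℕ, {J : Finset ℕ // J ∈ I.powerset} =>
      a q.2.1 * b (q.1 \ q.2.1) := by
    have h2 := (Equiv.summable_iff disjEquiv.symm).2 Ssub
    refine h2.congr fun q => ?_
    obtain ⟨I, J, hJ⟩ := q
    rfl
  have hF : ∀ I : Finset ℕ,
      (∑' J : {J : Finset ℕ // J ∈ I.powerset}, a J.1 * b (I \ J.1))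
        = ∑ J ∈ I.powerset, a J * b (I \ J) := by
    intro I
    rw [tsum_fintype]
    exact Finset.sum_coe_sort I.powerset (fun J => a J * b (I \ J))
  have SF : Summable fun I : Finset ℕ => ∑ J ∈ I.powerset, a J * b (I \ J) := by
    have := Ssig.sigma
    simpa only [hF] using this
  refine ⟨SF, ?_⟩
  calc (∑' I : Finset ℕ, ∑ J ∈ I.powerset, a J * b (I \ J))
      = ∑' q : Σ I : Finset ℕ, {J : Finset ℕ // J ∈ I.powerset},
          a q.2.1 * b (q.1 \ q.2.1) := by
        rw [Summable.tsum_sigma' (fun I => Summable.of_finite) Ssig]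
        exact tsum_congr fun I => (hF I).symm
    _ = ∑' p : {p : Finset ℕ × Finset ℕ // Disjoint p.1 p.2}, a p.1.1 * b p.1.2 := by
        rw [← Equiv.tsum_eq disjEquiv.symm]
        rfl
    _ ≤ ∑' p : Finset ℕ × Finset ℕ, a p.1 * b p.2 :=
        Summable.tsum_le_tsum_of_inj Subtype.val Subtype.coe_injective
          (fun c _ => mul_nonneg (ha0 _) (hb0 _)) (fun p => le_rfl) Ssub Sprod
    _ = (∑' J, a J) * ∑' K, b K := by
        have hfib : ∀ J, Summable fun K => a J * b K := fun J => hb.mul_left _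
        rw [Summable.tsum_prod' Sprod hfib]
        simp [tsum_mul_left, tsum_mul_right]

/-- For every `x, y ∈ Λ`, the Grassmann product coefficient function again lies in ℓ¹,
hence defines an element `x*y ∈ Λ`, and its ℓ¹-norm satisfies `‖x*y‖ ≤ ‖x‖·‖y‖`. -/
theorem grass_mul_memℓp_and_norm_le (x y : Lambda) :
    ∃ h : Memℓp (grassCoeff (⇑x) (⇑y)) 1,
      ‖(⟨grassCoeff (⇑x) (⇑y), h⟩ : Lambda)‖ ≤ ‖x‖ * ‖y‖ := by
  have hp : (0:ℝ) < (1 : ENNReal).toReal := by norm_num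
  have Sx : Summable fun J => ‖x J‖ := by
    simpa using (lp.memℓp x).summable hp
  have Sy : Summable fun K => ‖y K‖ := by
    simpa using (lp.memℓp y).summable hp
  obtain ⟨SF, hle⟩ := grass_key (fun J => ‖x J‖) (fun K => ‖y K‖) Sx Sy
    (fun _ => norm_nonneg _) (fun _ => norm_nonneg _)
  have hbound : ∀ I : Finset ℕ, ‖grassCoeff (⇑x) (⇑y) I‖
      ≤ ∑ J ∈ I.powerset, ‖x J‖ * ‖y (I \ J)‖ := by
    intro I
    refine (norm_sum_le _ _).trans (Finset.sum_le_sum fun J _ => ?_)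
    rw [norm_mul, norm_mul]
    have hs : ‖shuffleSign J (I \ J)‖ = 1 := by
      rw [shuffleSign, norm_pow, norm_neg, norm_one, one_pow]
    rw [hs, one_mul]
  have hsummable : Summable fun I => ‖grassCoeff (⇑x) (⇑y) I‖ :=
    Summable.of_nonneg_of_le (fun _ => norm_nonneg _) hbound SF
  have hmem : Memℓp (grassCoeff (⇑x) (⇑y)) 1 := by
    apply memℓp_gen
    simpa using hsummable
  refine ⟨hmem, ?_⟩
  have hnorm : ‖(⟨grassCoeff (⇑x) (⇑y), hmem⟩ : Lambda)‖
      = ∑' I, ‖grassCoeff (⇑x) (⇑y) I‖ := by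
    rw [lp.norm_eq_tsum_rpow hp]
    simp
  have hnx : ‖x‖ = ∑' J, ‖x J‖ := by rw [lp.norm_eq_tsum_rpow hp]; simp
  have hny : ‖y‖ = ∑' K, ‖y K‖ := by rw [lp.norm_eq_tsum_rpow hp]; simp
  rw [hnorm, hnx, hny]
  exact (Summable.tsum_le_tsum hbound hsummable SF).trans hle
end
end

section
/- Let A be a Banach algebra over ℝ, R > 0, and let (a_k) be a sequence of real numbers such that Σ_{k=0}^∞ |a_k|·‖M‖^k converges for every M ∈ A with ‖M‖ ≤ R. Then the function f defined on the open ball B_R(0) ⊆ A by f(M) = Σ_{k=0}^∞ a_k M^k is infinitely Fréchet differentiable (ContDiffOn ℝ ∞) on B_R(0), and for every M with ‖M‖ < R and every H ∈ A the Fréchet derivative is given by (fderiv f M)(H) = Σ_{k=1}^∞ a_k Σ_{i=0}^{k−1} M^{k−1−i} H M^{i}. -/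
/-!
On the ball `‖M‖ < R` the series is the sum of the scalar power series `ofScalars A a`, whose
radius is at least `R` because `‖ofScalars A a n‖ ≤ |a n|` for `n ≥ 1`; so the sum is analytic,
hence smooth, there. For the derivative, differentiate term by term: the derivative of
`x ↦ x ^ n` is `H ↦ ∑_{i<n} x^(n-1-i) H x^i`, of norm at most `n ‖x‖^(n-1)`, and for `r < R` the
bounds `|a n| n r^(n-1) ≤ (sup_k |a k| R^k) / R · n (r/R)^(n-1)` are summable, so the derivatives
converge uniformly on the ball of radius `r`.
-/

open scoped BigOperators ContDiff

open Finset
open scoped NNReal RightActions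

section NormBounds

variable {𝕜 A : Type*} [NontriviallyNormedField 𝕜] [NormedRing A] [NormedAlgebra 𝕜 A]

theorem norm_pow_mul_le (x y : A) (n : ℕ) : ‖x ^ n * y‖ ≤ ‖x‖ ^ n * ‖y‖ := by
  induction n with
  | zero => simp
  | succ n ih =>
    calc ‖x ^ (n + 1) * y‖ = ‖x * (x ^ n * y)‖ := by rw [pow_succ', mul_assoc]
      _ ≤ ‖x‖ * (‖x‖ ^ n * ‖y‖) := (norm_mul_le _ _).trans (by gcongr)
      _ = ‖x‖ ^ (n + 1) * ‖y‖ := by ring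

theorem norm_mul_pow_le (x y : A) (n : ℕ) : ‖y * x ^ n‖ ≤ ‖y‖ * ‖x‖ ^ n := by
  induction n with
  | zero => simp
  | succ n ih =>
    calc ‖y * x ^ (n + 1)‖ = ‖(y * x ^ n) * x‖ := by rw [pow_succ, mul_assoc]
      _ ≤ ‖y‖ * ‖x‖ ^ n * ‖x‖ := (norm_mul_le _ _).trans (by gcongr)
      _ = ‖y‖ * ‖x‖ ^ (n + 1) := by ring

variable (𝕜) in
theorem norm_pow_smul_id_smul_pow_le (x : A) (j i : ℕ) :
    ‖x ^ j •> ContinuousLinearMap.id 𝕜 A <• x ^ i‖ ≤ ‖x‖ ^ (j + i) := by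
  refine ContinuousLinearMap.opNorm_le_bound _ (by positivity) fun H => ?_
  calc ‖(x ^ j •> ContinuousLinearMap.id 𝕜 A <• x ^ i) H‖ = ‖x ^ j * (H * x ^ i)‖ := by
        simp only [smul_apply, ContinuousLinearMap.id_apply, smul_eq_mul, op_smul_eq_mul, mul_assoc]
    _ ≤ ‖x‖ ^ j * (‖H‖ * ‖x‖ ^ i) :=
        (norm_pow_mul_le _ _ _).trans (by gcongr; exact norm_mul_pow_le _ _ _)
    _ = ‖x‖ ^ (j + i) * ‖H‖ := by ring

variable (𝕜) in
theorem norm_sum_pow_smul_id_smul_pow_le {x : A} {r : ℝ} (hx : ‖x‖ ≤ r) (n : ℕ) :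
    ‖∑ i ∈ range n, x ^ (n - 1 - i) •> ContinuousLinearMap.id 𝕜 A <• x ^ i‖
      ≤ n * r ^ (n - 1) := by
  calc _ ≤ ∑ i ∈ range n, ‖x ^ (n - 1 - i) •> ContinuousLinearMap.id 𝕜 A <• x ^ i‖ :=
        norm_sum_le _ _
    _ ≤ ∑ _i ∈ range n, r ^ (n - 1) := by
        refine sum_le_sum fun i hi => ?_
        have : n - 1 - i + i = n - 1 := by simp only [mem_range] at hi; omega
        calc _ ≤ ‖x‖ ^ (n - 1 - i + i) := norm_pow_smul_id_smul_pow_le 𝕜 x (n - 1 - i) i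
          _ ≤ r ^ (n - 1) := by rw [this]; gcongr
    _ = n * r ^ (n - 1) := by simp

end NormBounds

theorem summable_nat_mul_pow_sub_one {q : ℝ} (hq : |q| < 1) :
    Summable fun n : ℕ => (n : ℝ) * q ^ (n - 1) := by
  rw [← summable_nat_add_iff 1]
  refine ((summable_pow_mul_geometric_of_norm_lt_one 1 hq).add
    (summable_geometric_of_abs_lt_one hq)).congr fun n => ?_
  simp only [Nat.add_sub_cancel, Nat.cast_add, Nat.cast_one, pow_one]
  ring

theorem summable_abs_mul_nat_mul_pow_sub_one {a : ℕ → ℝ} {r R : ℝ}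
    (ha : Summable fun n => |a n| * R ^ n) (hr : 0 ≤ r) (hrR : r < R) :
    Summable fun n : ℕ => |a n| * (n * r ^ (n - 1)) := by
  have hR : 0 < R := hr.trans_lt hrR
  have hq : |r / R| < 1 := by rwa [abs_of_nonneg (by positivity), div_lt_one hR]
  refine ((summable_nat_mul_pow_sub_one hq).mul_left ((∑' n, |a n| * R ^ n) / R)).of_nonneg_of_le
    (fun n => by positivity) fun n => ?_
  have hterm : |a n| * R ^ n ≤ ∑' n, |a n| * R ^ n := ha.le_tsum n fun _ _ => by positivity
  calc |a n| * (n * r ^ (n - 1)) = (|a n| * R ^ n) / R * (n * (r / R) ^ (n - 1)) := by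
        rcases n with _ | n
        · simp
        · simp only [Nat.add_sub_cancel, div_pow, pow_succ]
          field_simp
    _ ≤ _ := by gcongr

section Analytic

variable {𝕜 E : Type*} [NontriviallyNormedField 𝕜] [NormedRing E] [NormedAlgebra 𝕜 E]

theorem le_radius_ofScalars {c : ℕ → 𝕜} {r : ℝ≥0} (hc : Summable fun n => ‖c n‖ * r ^ n) :
    (r : ENNReal) ≤ (FormalMultilinearSeries.ofScalars E c).radius := by
  refine (FormalMultilinearSeries.ofScalars E c).le_radius_of_summable_norm
    (hc.of_norm_bounded_eventually_nat ?_)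
  filter_upwards [Filter.eventually_gt_atTop 0] with n hn
  rw [Real.norm_of_nonneg (by positivity)]
  gcongr
  exact FormalMultilinearSeries.ofScalars_norm_le E c n hn

theorem analyticOnNhd_tsum_smul_pow [CompleteSpace E] {c : ℕ → 𝕜} {r : ℝ≥0}
    (hc : Summable fun n => ‖c n‖ * r ^ n) :
    AnalyticOnNhd 𝕜 (fun x : E => ∑' n, c n • x ^ n) (Metric.ball 0 r) := by
  rw [← FormalMultilinearSeries.ofScalarsSum_eq_tsum, ← Metric.eball_coe]
  exact (FormalMultilinearSeries.ofScalars E c).analyticOnNhd.mono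
    (Metric.eball_subset_eball (le_radius_ofScalars hc))

end Analytic

section Derivative

variable {A : Type*} [NormedRing A] [NormedAlgebra ℝ A]

theorem norm_smul_sum_pow_smul_id_smul_pow_le (c : ℝ) {x : A} {r : ℝ} (hx : ‖x‖ ≤ r) (n : ℕ) :
    ‖c • ∑ i ∈ range n, x ^ (n - 1 - i) •> ContinuousLinearMap.id ℝ A <• x ^ i‖
      ≤ |c| * (n * r ^ (n - 1)) := by
  rw [norm_smul, Real.norm_eq_abs]
  gcongr
  exact norm_sum_pow_smul_id_smul_pow_le ℝ hx n

theorem hasFDerivAt_tsum_smul_pow [CompleteSpace A] {a : ℕ → ℝ} {R : ℝ}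
    (ha : Summable fun n => |a n| * R ^ n) {M : A} (hM : ‖M‖ < R) :
    HasFDerivAt (fun x : A => ∑' n, a n • x ^ n)
      (∑' n, a n • ∑ i ∈ range n, M ^ (n - 1 - i) •> ContinuousLinearMap.id ℝ A <• M ^ i) M := by
  obtain ⟨r, hMr, hrR⟩ := exists_between hM
  have hr : 0 ≤ r := (norm_nonneg M).trans hMr.le
  have hderiv : ∀ n (x : A), HasFDerivAt (fun x : A => a n • x ^ n)
      (a n • ∑ i ∈ range n, x ^ (n - 1 - i) •> ContinuousLinearMap.id ℝ A <• x ^ i) x :=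
    fun n x => by
      have h := (hasFDerivAt_pow' (𝕜 := ℝ) n (x := x)).const_smul (a n)
      rwa [Nat.pred_eq_sub_one] at h
  have hbound : ∀ n, ∀ x ∈ Metric.ball (0 : A) r,
      ‖a n • ∑ i ∈ range n, x ^ (n - 1 - i) •> ContinuousLinearMap.id ℝ A <• x ^ i‖
        ≤ |a n| * (n * r ^ (n - 1)) := fun n x hx =>
    norm_smul_sum_pow_smul_id_smul_pow_le (a n) (mem_ball_zero_iff.mp hx).le n
  have hsum_zero : Summable fun n => a n • (0 : A) ^ n :=
    summable_of_ne_finset_zero (s := {0}) fun n hn => by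
      rw [zero_pow (by simpa using hn), smul_zero]
  exact hasFDerivAt_tsum_of_isPreconnected (summable_abs_mul_nat_mul_pow_sub_one ha hr hrR)
    Metric.isOpen_ball (convex_ball (0 : A) r).isPreconnected (fun n x _ => hderiv n x) hbound
    (Metric.mem_ball_self ((norm_nonneg M).trans_lt hMr)) hsum_zero (mem_ball_zero_iff.mpr hMr)

theorem summable_smul_sum_pow_smul_id_smul_pow [CompleteSpace A] {a : ℕ → ℝ} {R : ℝ}
    (ha : Summable fun n => |a n| * R ^ n) {M : A} (hM : ‖M‖ < R) :
    Summable fun n =>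
      a n • ∑ i ∈ range n, M ^ (n - 1 - i) •> ContinuousLinearMap.id ℝ A <• M ^ i :=
  .of_norm_bounded (summable_abs_mul_nat_mul_pow_sub_one ha (norm_nonneg M) hM) fun n =>
    norm_smul_sum_pow_smul_id_smul_pow_le (a n) le_rfl n

end Derivative

/-- Lemma 5.13 of the paper: if `Σ |a_k|·‖M‖^k` converges for `‖M‖ ≤ R` in a real Banach
algebra `A`, then `f(M) = Σ a_k M^k` is `C^∞` (infinitely Fréchet differentiable) on the
open ball `B_R(0)`, with Fréchet derivative
`(fderiv f M)(H) = Σ_{k≥1} a_k Σ_{i=0}^{k−1} M^{k−1−i} H M^i`. -/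
theorem powerSeries_contDiffOn_ball {A : Type*} [NormedRing A] [NormedAlgebra ℝ A]
    [CompleteSpace A] (R : ℝ) (hR : 0 < R) (a : ℕ → ℝ)
    (hconv : ∀ M : A, ‖M‖ ≤ R → Summable fun k : ℕ => |a k| * ‖M‖ ^ k) :
    ContDiffOn ℝ ∞ (fun M : A => ∑' k : ℕ, a k • M ^ k) (Metric.ball (0 : A) R) ∧
    ∀ M : A, ‖M‖ < R → ∀ H : A,
      fderiv ℝ (fun M : A => ∑' k : ℕ, a k • M ^ k) M H
        = ∑' m : ℕ, a (m + 1) •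
            ∑ i ∈ Finset.range (m + 1), M ^ (m - i) * H * M ^ i := by
  rcases subsingleton_or_nontrivial A with hA | hA
  · refine ⟨?_, fun _ _ _ => Subsingleton.elim _ _⟩
    exact contDiffOn_const.congr fun _ _ => Subsingleton.elim _ (0 : A)
  obtain ⟨x, hx⟩ := exists_norm_eq A hR.le
  have ha : Summable fun k => |a k| * R ^ k := hx ▸ hconv x hx.le
  refine ⟨?_, fun M hM H => ?_⟩
  · have hanalytic := analyticOnNhd_tsum_smul_pow (E := A) (c := a) (r := R.toNNReal)
      (by simpa only [Real.coe_toNNReal _ hR.le, Real.norm_eq_abs] using ha)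
    rw [Real.coe_toNNReal _ hR.le] at hanalytic
    exact hanalytic.contDiffOn Metric.isOpen_ball.uniqueDiffOn
  · have hL := (ContinuousLinearMap.apply ℝ A H).hasSum
      (summable_smul_sum_pow_smul_id_smul_pow ha hM).hasSum
    rw [(hasFDerivAt_tsum_smul_pow ha hM).fderiv, ← ContinuousLinearMap.apply_apply H,
      ← hL.tsum_eq, hL.summable.tsum_eq_zero_add]
    simp [mul_assoc]
end

section
/- Let A be a unital Banach algebra over ℝ and let a ∈ A with ‖a‖ < 2π. Then both series η(a) = Σ_{k=0}^∞ (1/(k+1)!) a^k and ζ(a) = Σ_{k=0}^∞ (B_k / k!) a^k converge absolutely in A, and they are mutually inverse: η(a) * ζ(a) = 1 and ζ(a) * η(a) = 1. In particular η(a) is a unit of A. -/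
/-!
As formal power series, `η(x) = (eˣ - 1)/x` and `ζ(x) = x/(eˣ - 1)` are inverse to each other:
this is the identity `bernoulliPowerSeries * (exp - 1) = X` divided by `X`. Both series converge absolutely
at `a`: the coefficients of `η` are bounded by `1/k!`, and `|B_k|/k! ≤ (π²/3)/(2π)^k` by Euler's
formula `ζ(2m) = (-1)^(m+1) (2π)^(2m) B_{2m} / (2 (2m)!)` together with `ζ(2m) ≤ ζ(2) = π²/6`.
Absolute convergence lets the product of the two sums be computed as a Cauchy product, whose
coefficients are those of the product power series `η ζ = 1`.
-/

open Real Finset PowerSeries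
open scoped Nat

namespace PowerSeries

variable (A : Type*) [CommRing A] [Algebra ℚ A]

def expSubOneDivX : PowerSeries A :=
  mk fun n => algebraMap ℚ A (1 / (n + 1)!)

theorem X_mul_expSubOneDivX : X * expSubOneDivX A = exp A - 1 := by
  ext n
  cases n with
  | zero => simp
  | succ n => simp [expSubOneDivX, coeff_exp]

theorem bernoulliPowerSeries_mul_expSubOneDivX : bernoulliPowerSeries A * expSubOneDivX A = 1 :=
  mul_X_cancel <| by
    rw [mul_assoc, mul_comm _ X, X_mul_expSubOneDivX, bernoulliPowerSeries_mul_exp_sub_one, one_mul]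

theorem mk_one_div_factorial_succ_mul_mk_bernoulli_div_factorial :
    mk (fun k => 1 / ((k + 1)! : ℝ)) * mk (fun k => (bernoulli k : ℝ) / k !) = 1 := by
  rw [mul_comm]
  convert bernoulliPowerSeries_mul_expSubOneDivX ℝ using 2 <;> ext <;>
    simp [bernoulliPowerSeries, expSubOneDivX]

end PowerSeries

theorem abs_bernoulli_two_mul_div_factorial_le {m : ℕ} (hm : m ≠ 0) :
    |(bernoulli (2 * m) : ℝ)| / (2 * m)! ≤ π ^ 2 / 3 / (2 * π) ^ (2 * m) := by
  have hζ := hasSum_zeta_nat hm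
  set ζ := (-1 : ℝ) ^ (m + 1) * 2 ^ (2 * m - 1) * π ^ (2 * m) * bernoulli (2 * m) / (2 * m)!
  have hζ_le : |ζ| ≤ π ^ 2 / 6 := by
    rw [abs_of_nonneg (hasSum_le (fun n => by positivity) hasSum_zero hζ)]
    refine hasSum_le (fun n => ?_) hζ hasSum_zeta_two
    rcases n.eq_zero_or_pos with rfl | hn
    · simp [hm]
    · gcongr
      · exact_mod_cast hn
      · omega
  have h2 : (2 : ℝ) ^ (2 * m) = 2 * 2 ^ (2 * m - 1) := by
    rw [← pow_succ']
    congr 1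
    omega
  calc |(bernoulli (2 * m) : ℝ)| / (2 * m)! = 2 * |ζ| / (2 * π) ^ (2 * m) := by
        simp only [ζ, abs_div, abs_mul, abs_pow, abs_neg, abs_one, one_pow, one_mul, abs_two,
          abs_of_pos pi_pos, Nat.abs_cast, mul_pow, h2]
        field_simp
    _ ≤ 2 * (π ^ 2 / 6) / (2 * π) ^ (2 * m) := by gcongr
    _ = π ^ 2 / 3 / (2 * π) ^ (2 * m) := by ring

theorem abs_bernoulli_div_factorial_le (k : ℕ) :
    |(bernoulli k : ℝ)| / k ! ≤ π ^ 2 / 3 / (2 * π) ^ k := by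
  rcases k.even_or_odd' with ⟨m, rfl | rfl⟩
  · rcases eq_or_ne m 0 with rfl | hm
    · simp only [mul_zero, bernoulli_zero, Rat.cast_one, abs_one, Nat.factorial_zero,
        Nat.cast_one, div_one, pow_zero]
      nlinarith [pi_gt_three]
    · exact abs_bernoulli_two_mul_div_factorial_le hm
  · rcases eq_or_ne m 0 with rfl | hm
    · rw [div_le_div_iff₀ (by positivity) (by positivity)]
      norm_num [bernoulli_one]
      nlinarith [pi_gt_three]
    · rw [bernoulli_eq_bernoulli'_of_ne_one (by omega),
        bernoulli'_eq_zero_of_odd (odd_two_mul_add_one m) (by omega)]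
      simp only [Rat.cast_zero, abs_zero, zero_div]
      positivity

section NormedAlgebra

variable {𝕜 A : Type*} [NormedField 𝕜] [NormedRing A] [NormedAlgebra 𝕜 A]

-- Starting the comparison at `k = 1` avoids `‖a ^ 0‖ = ‖1‖`, which may exceed `1`.
theorem summable_norm_smul_pow {c : ℕ → 𝕜} {a : A} (h : Summable fun k => ‖c k‖ * ‖a‖ ^ k) :
    Summable fun k => ‖c k • a ^ k‖ := by
  rw [← summable_nat_add_iff 1] at h ⊢
  refine h.of_nonneg_of_le (fun _ => norm_nonneg _) fun k => ?_
  grw [norm_smul_le, norm_pow_le' a k.succ_pos]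

theorem tsum_smul_pow_mul_tsum_smul_pow [CompleteSpace A] {c d : ℕ → 𝕜} {a : A}
    (hc : Summable fun k => ‖c k • a ^ k‖) (hd : Summable fun k => ‖d k • a ^ k‖) :
    (∑' k, c k • a ^ k) * (∑' k, d k • a ^ k) = ∑' n, coeff n (mk c * mk d) • a ^ n := by
  rw [tsum_mul_tsum_eq_tsum_sum_antidiagonal_of_summable_norm hc hd]
  refine tsum_congr fun n => ?_
  rw [coeff_mul, sum_smul]
  refine sum_congr rfl fun ij hij => ?_
  rw [HasAntidiagonal.mem_antidiagonal] at hij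
  rw [smul_mul_smul_comm, ← pow_add, hij, coeff_mk, coeff_mk]

theorem tsum_smul_pow_mul_tsum_smul_pow_eq_one [CompleteSpace A] {c d : ℕ → 𝕜} {a : A}
    (hcd : mk c * mk d = 1)
    (hc : Summable fun k => ‖c k • a ^ k‖) (hd : Summable fun k => ‖d k • a ^ k‖) :
    (∑' k, c k • a ^ k) * (∑' k, d k • a ^ k) = 1 := by
  rw [tsum_smul_pow_mul_tsum_smul_pow hc hd, hcd,
    tsum_eq_single 0 fun n hn => by simp [coeff_one, hn]]
  simp

end NormedAlgebra

section RealNormedAlgebra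

variable {A : Type*} [NormedRing A] [NormedAlgebra ℝ A]

theorem summable_norm_one_div_factorial_succ_smul_pow (a : A) :
    Summable fun k => ‖(1 / ((k + 1)! : ℝ)) • a ^ k‖ := by
  refine summable_norm_smul_pow <| (Real.summable_pow_div_factorial ‖a‖).of_nonneg_of_le
    (fun _ => by positivity) fun k => ?_
  rw [Real.norm_of_nonneg (by positivity), one_div_mul_eq_div]
  gcongr
  exact k.le_succ

theorem summable_norm_bernoulli_div_factorial_smul_pow {a : A} (ha : ‖a‖ < 2 * π) :
    Summable fun k => ‖((bernoulli k : ℝ) / k !) • a ^ k‖ := by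
  have hr : ‖a‖ / (2 * π) < 1 := (div_lt_one (by positivity)).mpr ha
  refine summable_norm_smul_pow <|
    ((summable_geometric_of_lt_one (by positivity) hr).mul_left (π ^ 2 / 3)).of_nonneg_of_le
      (fun _ => by positivity) fun k => ?_
  calc ‖(bernoulli k : ℝ) / (k ! : ℝ)‖ * ‖a‖ ^ k ≤ π ^ 2 / 3 / (2 * π) ^ k * ‖a‖ ^ k := by
        gcongr
        rw [Real.norm_eq_abs, abs_div, Nat.abs_cast]
        exact abs_bernoulli_div_factorial_le k
    _ = π ^ 2 / 3 * (‖a‖ / (2 * π)) ^ k := by rw [div_pow]; ring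

end RealNormedAlgebra

/-- In a unital real Banach algebra `A`, for `‖a‖ < 2π` the series
`η(a) = Σ 1/(k+1)! a^k` and `ζ(a) = Σ B_k/k! a^k` (with `B_k` the Bernoulli numbers,
`B₁ = −1/2`) converge absolutely and are mutually inverse, so `η(a)` is a unit. -/
theorem eta_zeta_mutually_inverse {A : Type*} [NormedRing A] [NormedAlgebra ℝ A]
    [CompleteSpace A] (a : A) (ha : ‖a‖ < 2 * Real.pi) :
    (Summable fun k : ℕ => ‖(1 / (Nat.factorial (k + 1) : ℝ)) • a ^ k‖) ∧
    (Summable fun k : ℕ => ‖(((bernoulli k : ℚ) : ℝ) / (Nat.factorial k : ℝ)) • a ^ k‖) ∧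
    (∑' k : ℕ, (1 / (Nat.factorial (k + 1) : ℝ)) • a ^ k) *
        (∑' k : ℕ, (((bernoulli k : ℚ) : ℝ) / (Nat.factorial k : ℝ)) • a ^ k) = 1 ∧
    (∑' k : ℕ, (((bernoulli k : ℚ) : ℝ) / (Nat.factorial k : ℝ)) • a ^ k) *
        (∑' k : ℕ, (1 / (Nat.factorial (k + 1) : ℝ)) • a ^ k) = 1 ∧
    IsUnit (∑' k : ℕ, (1 / (Nat.factorial (k + 1) : ℝ)) • a ^ k) := by
  have hη := summable_norm_one_div_factorial_succ_smul_pow a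
  have hζ := summable_norm_bernoulli_div_factorial_smul_pow ha
  have hηζ := tsum_smul_pow_mul_tsum_smul_pow_eq_one
    mk_one_div_factorial_succ_mul_mk_bernoulli_div_factorial hη hζ
  have hζη := tsum_smul_pow_mul_tsum_smul_pow_eq_one
    ((mul_comm _ _).trans mk_one_div_factorial_succ_mul_mk_bernoulli_div_factorial) hζ hη
  exact ⟨hη, hζ, hηζ, hζη, ⟨⟨_, _, hηζ, hζη⟩, rfl⟩⟩
end
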